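/- arXiv:2102.12787 — 7 statements merged into one kernel-verified Lean document; each statement's English description precedes it below -/
import Mathlib

section
/- Let G = (V, E) be a finite connected graph of diameter at most D, with k = 3D + 2 and a level labeling λ : V → L such that every edge of G is protected (endpoint levels are adjacent on the cycle of levels). Then there exists a level ℓ and an integer 0 ≤ d ≤ D such that every node's level belongs to {φ^{+j}(ℓ) : 0 ≤ j ≤ d}, i.e., all levels lie in a contiguous arc of length at most D + 1 on the level cycle. -/
set_option autoImplicit false

/-- The forward operator φ on the level set `{ℓ : 1 ≤ |ℓ| ≤ k}`. -/
def forwardOp (k : ℤ) (ℓ : ℤ) : ℤ :=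
  if ℓ = -1 then 1 else if ℓ = k then -k else ℓ + 1

/-- Levels `ℓ`, `ℓ'` are adjacent if `ℓ' ∈ {ℓ, φ(ℓ), φ⁻¹(ℓ)}`. -/
def adjLvl (k : ℤ) (ℓ ℓ' : ℤ) : Prop :=
  ℓ' = ℓ ∨ ℓ' = forwardOp k ℓ ∨ ℓ = forwardOp k ℓ'

namespace Stmt4Aux

/-- Position of a level on the cycle `1,2,…,k,-k,…,-1` (range `[0, 2k)`). -/
def pos (k ℓ : ℤ) : ℤ := if 1 ≤ ℓ then ℓ - 1 else 2 * k + ℓ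

/-- Inverse of `pos`, taking any integer mod `2k`. -/
def lvl (k p : ℤ) : ℤ :=
  if p % (2 * k) < k then p % (2 * k) + 1 else p % (2 * k) - 2 * k

variable {k : ℤ}

lemma emod_bounds (hk : 1 ≤ k) (p : ℤ) : 0 ≤ p % (2 * k) ∧ p % (2 * k) < 2 * k :=
  ⟨Int.emod_nonneg p (by omega), Int.emod_lt_of_pos p (by omega)⟩

lemma lvl_valid (hk : 1 ≤ k) (p : ℤ) : 1 ≤ |lvl k p| ∧ |lvl k p| ≤ k := by
  obtain ⟨h1, h2⟩ := emod_bounds hk p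
  unfold lvl
  rcases lt_or_ge (p % (2 * k)) k with h | h
  · rw [if_pos h, abs_of_nonneg (by omega)]; omega
  · rw [if_neg (not_lt.mpr h), abs_of_neg (by omega)]; omega

lemma lvl_congr {p q : ℤ} (h : p ≡ q [ZMOD 2 * k]) : lvl k p = lvl k q := by
  unfold lvl
  rw [show p % (2 * k) = q % (2 * k) from h]

lemma lvl_pos_eq (hk : 1 ≤ k) {ℓ : ℤ} (h1 : 1 ≤ |ℓ|) (h2 : |ℓ| ≤ k) :
    lvl k (pos k ℓ) = ℓ := by
  obtain ⟨hl, hr⟩ := abs_le.mp h2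
  rcases le_abs.mp h1 with h | h
  · unfold pos lvl
    rw [if_pos h, Int.emod_eq_of_lt (by omega) (by omega), if_pos (by omega)]
    ring
  · unfold pos lvl
    rw [if_neg (show ¬(1:ℤ) ≤ ℓ by omega), Int.emod_eq_of_lt (by omega) (by omega),
      if_neg (by omega)]
    ring

lemma pos_lvl (hk : 1 ≤ k) (p : ℤ) : pos k (lvl k p) = p % (2 * k) := by
  obtain ⟨h1, h2⟩ := emod_bounds hk p
  unfold lvl pos
  rcases lt_or_ge (p % (2 * k)) k with h | h
  · rw [if_pos h, if_pos (by omega)]; ring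
  · rw [if_neg (not_lt.mpr h), if_neg (by omega)]; ring

lemma forward_lvl (hk : 1 ≤ k) (p : ℤ) : forwardOp k (lvl k p) = lvl k (p + 1) := by
  obtain ⟨h1, h2⟩ := emod_bounds hk p
  have h1m : (1 : ℤ) % (2 * k) = 1 := Int.emod_eq_of_lt (by omega) (by omega)
  have hmod : (p + 1) % (2 * k) = (p % (2 * k) + 1) % (2 * k) := by
    rw [Int.add_emod, h1m]
  unfold lvl forwardOp
  rcases eq_or_lt_of_le (by omega : p % (2 * k) + 1 ≤ 2 * k) with he | hlt
  · have hq0 : (p + 1) % (2 * k) = 0 := by rw [hmod, he, Int.emod_self]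
    rw [hq0]
    split_ifs <;> omega
  · have hq1 : (p + 1) % (2 * k) = p % (2 * k) + 1 := by
      rw [hmod]; exact Int.emod_eq_of_lt (by omega) hlt
    rw [hq1]
    split_ifs <;> omega

lemma iterate_lvl (hk : 1 ≤ k) (p : ℤ) (j : ℕ) :
    (forwardOp k)^[j] (lvl k p) = lvl k (p + j) := by
  induction j generalizing p with
  | zero => simp
  | succ n ih =>
    rw [Function.iterate_succ_apply, forward_lvl hk, ih]
    congr 1
    push_cast
    ring

lemma pos_forward (hk : 1 ≤ k) {ℓ : ℤ} (h1 : 1 ≤ |ℓ|) (h2 : |ℓ| ≤ k) :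
    pos k (forwardOp k ℓ) = (pos k ℓ + 1) % (2 * k) := by
  have h : forwardOp k ℓ = lvl k (pos k ℓ + 1) := by
    rw [← forward_lvl hk, lvl_pos_eq hk h1 h2]
  rw [h, pos_lvl hk]

lemma adj_step (hk : 1 ≤ k) {a b : ℤ} (ha1 : 1 ≤ |a|) (ha2 : |a| ≤ k)
    (hb1 : 1 ≤ |b|) (hb2 : |b| ≤ k) (h : adjLvl k a b) :
    ∃ ε : ℤ, |ε| ≤ 1 ∧ pos k b ≡ pos k a + ε [ZMOD 2 * k] := by
  rcases h with h | h | h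
  · exact ⟨0, by norm_num, by rw [h, add_zero]⟩
  · refine ⟨1, by norm_num, ?_⟩
    rw [h, pos_forward hk ha1 ha2]
    exact Int.emod_emod_of_dvd _ dvd_rfl
  · refine ⟨-1, by norm_num, ?_⟩
    rw [h, pos_forward hk hb1 hb2]
    have h2' : (pos k b + 1) % (2 * k) + -1 ≡ pos k b + 1 + -1 [ZMOD 2 * k] :=
      Int.ModEq.add_right _ (Int.emod_emod_of_dvd _ dvd_rfl)
    have h3 : pos k b + 1 + -1 = pos k b := by ring
    rw [h3] at h2'
    exact h2'.symm

lemma walk_step (hk : 1 ≤ k) {V : Type} (G : SimpleGraph V) (lab : V → ℤ)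
    (hlab : ∀ v, 1 ≤ |lab v| ∧ |lab v| ≤ k)
    (hprot : ∀ u v : V, G.Adj u v → adjLvl k (lab u) (lab v))
    {u v : V} (w : G.Walk u v) :
    ∃ δ : ℤ, |δ| ≤ (w.length : ℤ) ∧ pos k (lab v) ≡ pos k (lab u) + δ [ZMOD 2 * k] := by
  induction w with
  | nil => exact ⟨0, by simp, by rw [add_zero]⟩
  | @cons u x v hadj w ih =>
    obtain ⟨δ, hδ1, hδ2⟩ := ih
    obtain ⟨ε, hε1, hε2⟩ :=
      adj_step hk (hlab u).1 (hlab u).2 (hlab x).1 (hlab x).2 (hprot u x hadj)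
    refine ⟨ε + δ, ?_, ?_⟩
    · have h3 := abs_add_le ε δ
      simp only [SimpleGraph.Walk.length_cons]
      push_cast
      omega
    · have h4 := hδ2.trans (Int.ModEq.add_right δ hε2)
      rw [← add_assoc]
      exact h4

end Stmt4Aux

open Stmt4Aux in
/-- in a connected graph of diameter at most `D` with `k = 3D + 2`,
if every edge is protected (endpoint levels adjacent on the level cycle), then all
levels lie in a contiguous arc `{φ^[j] ℓ : 0 ≤ j ≤ d}` with `d ≤ D`. -/
theorem stmt_4 {V : Type} [Fintype V] (G : SimpleGraph V) (hconn : G.Connected)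
    (D : ℕ) (hdiam : ∀ u v : V, G.dist u v ≤ D)
    (k : ℤ) (hk : k = 3 * D + 2)
    (lab : V → ℤ) (hlab : ∀ v, 1 ≤ |lab v| ∧ |lab v| ≤ k)
    (hprot : ∀ u v : V, G.Adj u v → adjLvl k (lab u) (lab v)) :
    ∃ ℓ : ℤ, (1 ≤ |ℓ| ∧ |ℓ| ≤ k) ∧ ∃ d ≤ D, ∀ v : V, ∃ j ≤ d, lab v = (forwardOp k)^[j] ℓ := by
  have hk1 : (1 : ℤ) ≤ k := by omega
  obtain ⟨u0⟩ := hconn.nonempty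
  have hdelta : ∀ v : V, ∃ δ : ℤ, |δ| ≤ (D : ℤ) ∧
      pos k (lab v) ≡ pos k (lab u0) + δ [ZMOD 2 * k] := by
    intro v
    obtain ⟨w, hw⟩ := (hconn u0 v).exists_walk_length_eq_dist
    obtain ⟨δ, h1, h2⟩ := walk_step hk1 G lab hlab hprot w
    refine ⟨δ, ?_, h2⟩
    rw [hw] at h1
    exact h1.trans (by exact_mod_cast hdiam u0 v)
  choose δ hδabs hδmod using hdelta
  obtain ⟨umin, -, hmin⟩ :=
    Finset.exists_min_image Finset.univ δ ⟨u0, Finset.mem_univ u0⟩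
  obtain ⟨vmax, -, hmax⟩ :=
    Finset.exists_max_image Finset.univ δ ⟨u0, Finset.mem_univ u0⟩
  obtain ⟨w, hw⟩ := (hconn umin vmax).exists_walk_length_eq_dist
  obtain ⟨δ', hδ'1, hδ'2⟩ := walk_step hk1 G lab hlab hprot w
  have hδ'D : |δ'| ≤ (D : ℤ) := by
    rw [hw] at hδ'1
    exact hδ'1.trans (by exact_mod_cast hdiam umin vmax)
  have hcong : δ vmax - δ umin ≡ δ' [ZMOD 2 * k] := by
    have h1 := (hδmod vmax).symm.trans (hδ'2.trans (Int.ModEq.add_right δ' (hδmod umin)))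
    rw [add_assoc] at h1
    have h2 := h1.add_left_cancel' (pos k (lab u0))
    -- h2 : δ vmax ≡ δ umin + δ'
    have h3 := h2.sub_right (δ umin)
    have h4 : δ umin + δ' - δ umin = δ' := by ring
    rwa [h4] at h3
  have a1 := abs_le.mp hδ'D
  have a2 := abs_le.mp (hδabs vmax)
  have a3 := abs_le.mp (hδabs umin)
  have heq : δ vmax - δ umin = δ' := by
    have hdvd : (2 * k) ∣ (δ' - (δ vmax - δ umin)) := Int.ModEq.dvd hcong
    by_contra hne'
    have hm0 : δ' - (δ vmax - δ umin) ≠ 0 := by omega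
    have hle := Int.le_of_dvd (abs_pos.mpr hm0) ((dvd_abs _ _).mpr hdvd)
    rcases abs_cases (δ' - (δ vmax - δ umin)) with ⟨h, -⟩ | ⟨h, -⟩ <;> omega
  have hmin' : ∀ v : V, δ umin ≤ δ v := fun v => hmin v (Finset.mem_univ v)
  have hmax' : ∀ v : V, δ v ≤ δ vmax := fun v => hmax v (Finset.mem_univ v)
  refine ⟨lvl k (pos k (lab u0) + δ umin), lvl_valid hk1 _,
    (δ vmax - δ umin).toNat, ?_, ?_⟩
  · omega
  · intro v
    refine ⟨(δ v - δ umin).toNat, ?_, ?_⟩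
    · have h5 := hmin' v
      have h6 := hmax' v
      omega
    · rw [iterate_lvl hk1]
      have hj : (((δ v - δ umin).toNat : ℤ)) = δ v - δ umin :=
        Int.toNat_of_nonneg (by have := hmin' v; omega)
      have harg : pos k (lab u0) + δ umin + ((δ v - δ umin).toNat : ℤ)
          = pos k (lab u0) + δ v := by rw [hj]; ring
      rw [harg]
      calc lab v = lvl k (pos k (lab v)) := (lvl_pos_eq hk1 (hlab v).1 (hlab v).2).symm
        _ = lvl k (pos k (lab u0) + δ v) := lvl_congr (hδmod v)
end

section
/- In the synchronous module Restart, if some node is in a Restart state σ(i) at time t_0, then there exists a time t with t_0 ≤ t ≤ t_0 + O(D) (specifically at most t_0 + 7D) such that all nodes exit Restart concurrently in step t. -/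
set_option autoImplicit false

def closedNbhd {V : Type} (G : SimpleGraph V) (v : V) : Set V := {u | u = v ∨ G.Adj u v}

def RestartStep {V Q : Type} (D : ℕ) (σ : ℕ → Q) (q0 : Q) (G : SimpleGraph V)
    (c c' : V → Q) : Prop :=
  ∀ v : V,
    ((∃ u ∈ closedNbhd G v, ∃ i ≤ 2 * D, c u = σ i) →
      (∃ u ∈ closedNbhd G v, ∀ i ≤ 2 * D, c u ≠ σ i) →
      c' v = σ 0) ∧
    ((∀ u ∈ closedNbhd G v, ∃ i ≤ 2 * D, c u = σ i) →
      (∃ u ∈ closedNbhd G v, c u ≠ σ (2 * D)) →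
      ∃ i, (∃ u ∈ closedNbhd G v, c u = σ i) ∧
        (∀ j < i, ∀ u ∈ closedNbhd G v, c u ≠ σ j) ∧ c' v = σ (i + 1)) ∧
    ((∀ u ∈ closedNbhd G v, c u = σ (2 * D)) → c' v = q0)

lemma mem_cn_self {V : Type} (G : SimpleGraph V) (v : V) : v ∈ closedNbhd G v := Or.inl rfl

lemma mem_cn_adj {V : Type} {G : SimpleGraph V} {u v : V} (h : G.Adj u v) :
    u ∈ closedNbhd G v := Or.inr h

/-- From `dist w v ≤ δ+1`, find a member of the closed neighborhood of `v`
at distance ≤ δ from `w`. -/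
lemma step_closer {V : Type} {G : SimpleGraph V} (hconn : G.Connected) (w v : V) (δ : ℕ)
    (h : G.dist w v ≤ δ + 1) : ∃ x ∈ closedNbhd G v, G.dist w x ≤ δ := by
  obtain ⟨p, hp⟩ := (hconn v w).exists_walk_length_eq_dist
  cases p with
  | nil => exact ⟨_, mem_cn_self G _, by simp [SimpleGraph.dist_self]⟩
  | cons hadj q =>
    rename_i x
    refine ⟨x, mem_cn_adj hadj.symm, ?_⟩
    have h1 : G.dist w x ≤ q.reverse.length := SimpleGraph.dist_le q.reverse
    have h2 : q.reverse.length = q.length := SimpleGraph.Walk.length_reverse q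
    have h3 : q.length + 1 = G.dist v w := by simpa using hp
    have h4 : G.dist v w = G.dist w v := SimpleGraph.dist_comm ..
    omega

/-- Rule 2, packaged: if all of `N⁺(v)` is in σ-states and some sensed index is `< 2D`,
then `v` moves to `σ (i+1)` where `i < 2D` is the minimum sensed index. -/
lemma stepB {V Q : Type} {G : SimpleGraph V} {D : ℕ} {σ : ℕ → Q} {q0 : Q} {c c' : V → Q}
    (hinj : ∀ i j, i ≤ 2 * D → j ≤ 2 * D → σ i = σ j → i = j)
    (hs : RestartStep D σ q0 G c c') (v : V)
    (hall : ∀ u ∈ closedNbhd G v, ∃ i ≤ 2 * D, c u = σ i)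
    (hlt : ∃ w ∈ closedNbhd G v, ∃ j < 2 * D, c w = σ j) :
    ∃ i < 2 * D, (∃ u ∈ closedNbhd G v, c u = σ i) ∧
      (∀ u ∈ closedNbhd G v, ∀ j ≤ 2 * D, c u = σ j → i ≤ j) ∧ c' v = σ (i + 1) := by
  obtain ⟨w, hw, j, hj, hcw⟩ := hlt
  have hne : c w ≠ σ (2 * D) := by
    rw [hcw]
    intro hh
    exact absurd (hinj j (2 * D) hj.le le_rfl hh) (Nat.ne_of_lt hj)
  obtain ⟨i, ⟨u, hu, hcu⟩, hmin, hc'⟩ := (hs v).2.1 hall ⟨w, hw, hne⟩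
  have hile : ∀ u' ∈ closedNbhd G v, ∀ k, k ≤ 2 * D → c u' = σ k → i ≤ k := by
    intro u' hu' k _ hck
    by_contra hik
    push_neg at hik
    exact hmin k hik u' hu' hck
  have hilt : i < 2 * D := lt_of_le_of_lt (hile w hw j hj.le hcw) hj
  exact ⟨i, hilt, ⟨u, hu, hcu⟩, hile, hc'⟩

/-- Along any walk from a σ-node to a non-σ-node there is an adjacent boundary pair. -/
lemma boundary {V Q : Type} {G : SimpleGraph V} {D : ℕ} {σ : ℕ → Q} (c : V → Q) :
    ∀ {x y : V}, G.Walk x y → (∃ i ≤ 2 * D, c x = σ i) → (∀ i ≤ 2 * D, c y ≠ σ i) →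
    ∃ a b, G.Adj b a ∧ (∃ i ≤ 2 * D, c a = σ i) ∧ (∀ i ≤ 2 * D, c b ≠ σ i) := by
  intro x y p
  induction p with
  | nil =>
    intro hx hy
    obtain ⟨i, hi, hc⟩ := hx
    exact absurd hc (hy i hi)
  | cons hadj q ih =>
    rename_i a b y' -- hadj : G.Adj a b, q : G.Walk b y'
    intro hx hy
    by_cases hb : ∃ i ≤ 2 * D, c b = σ i
    · exact ih hb hy
    · push_neg at hb
      exact ⟨a, b, hadj.symm, hx, hb⟩

/-- Phase 1: a `σ 0` node at time `s` spreads a wave: after `δ ≤ D` steps every node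
within distance `δ` is in a σ-state of index at most `δ`. -/
lemma phase1 {V Q : Type} {G : SimpleGraph V} (hconn : G.Connected) {D : ℕ} {σ : ℕ → Q}
    {q0 : Q} (hinj : ∀ i j, i ≤ 2 * D → j ≤ 2 * D → σ i = σ j → i = j)
    {c : ℕ → V → Q} (hstep : ∀ t, RestartStep D σ q0 G (c t) (c (t + 1)))
    (hD : 1 ≤ D) (s : ℕ) (u : V) (h0 : c s u = σ 0) :
    ∀ δ, δ ≤ D → ∀ v, G.dist u v ≤ δ → ∃ i ≤ δ, c (s + δ) v = σ i := by
  intro δ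
  induction δ with
  | zero =>
    intro _ v hv
    have huv : u = v := (hconn.dist_eq_zero_iff).mp (Nat.le_zero.mp hv)
    subst huv
    exact ⟨0, le_rfl, h0⟩
  | succ δ ih =>
    intro hδ v hv
    obtain ⟨x, hxm, hxd⟩ := step_closer hconn u v δ hv
    obtain ⟨ix, hix, hcx⟩ := ih (by omega) x hxd
    have hix2D : ix < 2 * D := by omega
    have hseq : s + (δ + 1) = (s + δ) + 1 := rfl
    by_cases hnon : ∃ y ∈ closedNbhd G v, ∀ i ≤ 2 * D, c (s + δ) y ≠ σ i
    · have h1 := (hstep (s + δ) v).1 ⟨x, hxm, ix, by omega, hcx⟩ hnon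
      exact ⟨0, by omega, by rw [hseq]; exact h1⟩
    · push_neg at hnon
      obtain ⟨i, hi, _, hmin, hc'⟩ := stepB hinj (hstep (s + δ)) v hnon ⟨x, hxm, ix, hix2D, hcx⟩
      have hiix : i ≤ ix := hmin x hxm ix (by omega) hcx
      exact ⟨i + 1, by omega, by rw [hseq]; exact hc'⟩

/-- Phases 1–3: from a `σ 0` node at time `s`, within `3D` steps all nodes are
simultaneously at `σ (2D)`. -/
lemma from_sigma0 {V Q : Type} {G : SimpleGraph V} (hconn : G.Connected) {D : ℕ}
    (hdiam : ∀ u v : V, G.dist u v ≤ D) {σ : ℕ → Q} {q0 : Q}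
    (hinj : ∀ i j, i ≤ 2 * D → j ≤ 2 * D → σ i = σ j → i = j)
    {c : ℕ → V → Q} (hstep : ∀ t, RestartStep D σ q0 G (c t) (c (t + 1)))
    (hD : 1 ≤ D) (s : ℕ) (u : V) (h0 : c s u = σ 0) :
    ∃ t, s ≤ t ∧ t ≤ s + 3 * D ∧ ∀ v, c t v = σ (2 * D) := by
  classical
  have hall : ∀ v, ∃ i ≤ D, c (s + D) v = σ i :=
    fun v => phase1 hconn hinj hstep hD s u h0 D le_rfl v (hdiam u v)
  set t2 := s + D with ht2
  have hPex : ∃ j, j ≤ 2 * D ∧ ∃ v, c t2 v = σ j := by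
    obtain ⟨i, hi, hc⟩ := hall u
    exact ⟨i, by omega, u, hc⟩
  set m0 := Nat.find hPex with hm0def
  obtain ⟨hm02D, w0, hw0⟩ := Nat.find_spec hPex
  have hm0min : ∀ v, ∀ j, j ≤ 2 * D → c t2 v = σ j → m0 ≤ j :=
    fun v j hj hc => Nat.find_min' hPex ⟨hj, v, hc⟩
  have hm0D : m0 ≤ D := by
    obtain ⟨i, hi, hc⟩ := hall w0
    exact le_trans (hm0min w0 i (by omega) hc) hi
  have inv : ∀ δ, δ ≤ 2 * D - m0 → ∀ v, ∃ i, i ≤ 2 * D ∧ m0 + δ ≤ i ∧ c (t2 + δ) v = σ i ∧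
      (∀ w, G.dist w v ≤ δ → ∀ j, j ≤ 2 * D → c t2 w = σ j → i ≤ δ + j) := by
    intro δ
    induction δ with
    | zero =>
      intro _ v
      obtain ⟨i, hiD, hc⟩ := hall v
      have hm0i := hm0min v i (by omega) hc
      refine ⟨i, by omega, by omega, hc, ?_⟩
      intro w hw j hj hcw
      have hwv : w = v := (hconn.dist_eq_zero_iff).mp (Nat.le_zero.mp hw)
      subst hwv
      have : i = j := hinj i j (by omega) hj (hc.symm.trans hcw)
      omega
    | succ δ ih =>
      intro hδ v
      have ihv := ih (by omega)
      have hallact : ∀ y ∈ closedNbhd G v, ∃ i ≤ 2 * D, c (t2 + δ) y = σ i := by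
        intro y _
        obtain ⟨i, h1, _, h3, _⟩ := ihv y
        exact ⟨i, h1, h3⟩
      obtain ⟨iv, hiv2D, hivlow, hcv, hivup⟩ := ihv v
      have hivlt : iv < 2 * D := by
        by_cases hDδ : D ≤ δ
        · have := hivup w0 (le_trans (hdiam w0 v) hDδ) m0 hm02D hw0
          omega
        · obtain ⟨jv, hjvD, hcvj⟩ := hall v
          have hd0 : G.dist v v ≤ δ := by simp [SimpleGraph.dist_self]
          have := hivup v hd0 jv (by omega) hcvj
          omega
      obtain ⟨i, hilt, ⟨u', hu', hcu'⟩, hmin, hc'⟩ :=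
        stepB hinj (hstep (t2 + δ)) v hallact ⟨v, mem_cn_self G v, iv, hivlt, hcv⟩
      obtain ⟨k, hk2D, hklow, hck, _⟩ := ihv u'
      have hik : i = k := hinj i k (by omega) hk2D (hcu'.symm.trans hck)
      have hseq : t2 + (δ + 1) = (t2 + δ) + 1 := rfl
      refine ⟨i + 1, by omega, by omega, by rw [hseq]; exact hc', ?_⟩
      intro w hw j hj hcw
      obtain ⟨x, hxm, hxd⟩ := step_closer hconn w v δ hw
      obtain ⟨kx, hkx2D, _, hckx, hkxup⟩ := ihv x
      have h1 : i ≤ kx := hmin x hxm kx hkx2D hckx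
      have h2 : kx ≤ δ + j := hkxup w hxd j hj hcw
      omega
  refine ⟨t2 + (2 * D - m0), by omega, by omega, fun v => ?_⟩
  obtain ⟨i, hi2D, hilow, hc, _⟩ := inv (2 * D - m0) le_rfl v
  have hieq : i = 2 * D := by omega
  rw [hieq] at hc
  exact hc

/-- If at some time every node is in a σ-state, then within `2D` steps either all nodes
are simultaneously at `σ (2D)`, or some node reaches `σ 0` within `2D + 1` steps. -/
lemma allActive {V Q : Type} {G : SimpleGraph V} (hconn : G.Connected) {D : ℕ}
    {σ : ℕ → Q} {q0 : Q}
    (hinj : ∀ i j, i ≤ 2 * D → j ≤ 2 * D → σ i = σ j → i = j)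
    (hq0 : ∀ i ≤ 2 * D, q0 ≠ σ i)
    {c : ℕ → V → Q} (hstep : ∀ t, RestartStep D σ q0 G (c t) (c (t + 1)))
    (t0 : ℕ) (hall : ∀ v, ∃ i ≤ 2 * D, c t0 v = σ i) :
    (∃ t, t0 ≤ t ∧ t ≤ t0 + 2 * D ∧ ∀ v, c t v = σ (2 * D)) ∨
    (∃ s a, t0 ≤ s ∧ s ≤ t0 + 2 * D + 1 ∧ c s a = σ 0) := by
  classical
  by_cases hQ : ∀ k, k ≤ 2 * D → ∀ v : V, ∃ i, i ≤ 2 * D ∧ k ≤ i ∧ c (t0 + k) v = σ i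
  · left
    refine ⟨t0 + 2 * D, by omega, le_rfl, fun v => ?_⟩
    obtain ⟨i, h1, h2, h3⟩ := hQ (2 * D) le_rfl v
    have hieq : i = 2 * D := by omega
    rw [hieq] at h3
    exact h3
  · have hPex : ∃ k, k ≤ 2 * D ∧ ¬ ∀ v : V, ∃ i, i ≤ 2 * D ∧ k ≤ i ∧ c (t0 + k) v = σ i := by
      push_neg at hQ
      obtain ⟨k, hk, hv⟩ := hQ
      refine ⟨k, hk, ?_⟩
      intro hcon
      obtain ⟨v, hv2⟩ := hv
      obtain ⟨i, h1, h2, h3⟩ := hcon v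
      exact absurd h3 (hv2 i h1 h2)
    set k := Nat.find hPex with hkdef
    obtain ⟨hk2D, hnQ⟩ := Nat.find_spec hPex
    have hQ0 : ∀ v : V, ∃ i, i ≤ 2 * D ∧ 0 ≤ i ∧ c (t0 + 0) v = σ i := by
      intro v
      obtain ⟨i, h1, h2⟩ := hall v
      exact ⟨i, h1, Nat.zero_le _, h2⟩
    have hk1 : 1 ≤ k := by
      by_contra hlt
      push_neg at hlt
      have hk0 : Nat.find hPex = 0 := by omega
      rw [hk0] at hnQ
      exact hnQ hQ0
    have hQk1 : ∀ v : V, ∃ i, i ≤ 2 * D ∧ k - 1 ≤ i ∧ c (t0 + (k - 1)) v = σ i := by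
      by_contra hcon
      exact Nat.find_min hPex (show k - 1 < k by omega) ⟨by omega, hcon⟩
    set t' := t0 + (k - 1) with ht'
    have htk : t0 + k = t' + 1 := by omega
    by_cases hg : ∀ v, c t' v = σ (2 * D)
    · left
      exact ⟨t', by omega, by omega, hg⟩
    · push_neg at hg
      obtain ⟨z, hz⟩ := hg
      obtain ⟨iz, hiz2D, _, hcz⟩ := hQk1 z
      have hizlt : iz < 2 * D := by
        by_contra hge
        push_neg at hge
        have : iz = 2 * D := by omega
        rw [this] at hcz
        exact hz hcz
      have hve : ∃ ve : V, ∀ w ∈ closedNbhd G ve, c t' w = σ (2 * D) := by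
        by_contra hno
        push_neg at hno
        apply hnQ
        intro v
        obtain ⟨w, hwm, hwne⟩ := hno v
        have hallact : ∀ y ∈ closedNbhd G v, ∃ i ≤ 2 * D, c t' y = σ i := by
          intro y _
          obtain ⟨i, h1, _, h3⟩ := hQk1 y
          exact ⟨i, h1, h3⟩
        obtain ⟨jw, hjw2D, _, hcw⟩ := hQk1 w
        have hjwlt : jw < 2 * D := by
          by_contra hge
          push_neg at hge
          have : jw = 2 * D := by omega
          rw [this] at hcw
          exact hwne hcw
        obtain ⟨i, hilt, ⟨u', hu', hcu'⟩, hmin, hc'⟩ :=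
          stepB hinj (hstep t') v hallact ⟨w, hwm, jw, hjwlt, hcw⟩
        obtain ⟨ku, hku2D, hkulow, hcku⟩ := hQk1 u'
        have hik : i = ku := hinj i ku (by omega) hku2D (hcu'.symm.trans hcku)
        refine ⟨i + 1, by omega, by omega, ?_⟩
        rw [htk]
        exact hc'
      obtain ⟨ve, hve⟩ := hve
      have hq0ve : c (t' + 1) ve = q0 := (hstep t' ve).2.2 hve
      have hallactz : ∀ y ∈ closedNbhd G z, ∃ i ≤ 2 * D, c t' y = σ i := by
        intro y _
        obtain ⟨i, h1, _, h3⟩ := hQk1 y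
        exact ⟨i, h1, h3⟩
      obtain ⟨i, hilt, _, _, hcz'⟩ :=
        stepB hinj (hstep t') z hallactz ⟨z, mem_cn_self G z, iz, hizlt, hcz⟩
      have hnact : ∀ i ≤ 2 * D, c (t' + 1) ve ≠ σ i := by
        intro i hi
        rw [hq0ve]
        exact hq0 i hi
      obtain ⟨p⟩ := hconn z ve
      obtain ⟨a, b, hadj, ha, hb⟩ := boundary (c (t' + 1)) p ⟨i + 1, by omega, hcz'⟩ hnact
      have hs0 : c (t' + 2) a = σ 0 :=
        (hstep (t' + 1) a).1 ⟨a, mem_cn_self G a, ha⟩ ⟨b, mem_cn_adj hadj, hb⟩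
      right
      exact ⟨t' + 2, a, by omega, by omega, hs0⟩

/-- in module Restart on a connected graph of diameter at most `D`, if
some node is in a Restart state `σ i` at time `t₀`, then there is a time
`t₀ ≤ t ≤ t₀ + 7D` at which all nodes exit Restart concurrently. -/
theorem stmt_12 {V Q : Type} [Fintype V] (G : SimpleGraph V) (hconn : G.Connected)
    (D : ℕ) (hdiam : ∀ u v : V, G.dist u v ≤ D)
    (σ : ℕ → Q) (q0 : Q)
    (hinj : ∀ i j, i ≤ 2 * D → j ≤ 2 * D → σ i = σ j → i = j)
    (hq0 : ∀ i ≤ 2 * D, q0 ≠ σ i)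
    (c : ℕ → V → Q)
    (hstep : ∀ t, RestartStep D σ q0 G (c t) (c (t + 1)))
    (t0 : ℕ) (v0 : V) (i0 : ℕ) (hi0 : i0 ≤ 2 * D) (hv0 : c t0 v0 = σ i0) :
    ∃ t, t0 ≤ t ∧ t ≤ t0 + 7 * D ∧
      ∀ v : V, c t v = σ (2 * D) ∧ c (t + 1) v = q0 := by
  rcases Nat.eq_zero_or_pos D with hD0 | hD
  · subst hD0
    have hsub : ∀ u v : V, u = v := fun u v =>
      (hconn.dist_eq_zero_iff).mp (Nat.le_zero.mp (hdiam u v))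
    have hi00 : i0 = 0 := by omega
    refine ⟨t0, le_rfl, by omega, fun v => ?_⟩
    have hv : c t0 v = σ (2 * 0) := by
      rw [hsub v v0, hv0, hi00]
    exact ⟨hv, (hstep t0 v).2.2 (fun w _ => by rw [hsub w v]; exact hv)⟩
  · classical
    by_cases hact : ∀ v, ∃ i ≤ 2 * D, c t0 v = σ i
    · rcases allActive hconn hinj hq0 hstep t0 hact with ⟨t, h1, h2, h3⟩ | ⟨s, a, h1, h2, h3⟩
      · exact ⟨t, h1, by omega, fun v => ⟨h3 v, (hstep t v).2.2 (fun w _ => h3 w)⟩⟩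
      · obtain ⟨t, g1, g2, g3⟩ := from_sigma0 hconn hdiam hinj hstep hD s a h3
        exact ⟨t, by omega, by omega, fun v => ⟨g3 v, (hstep t v).2.2 (fun w _ => g3 w)⟩⟩
    · push_neg at hact
      obtain ⟨y, hy⟩ := hact
      obtain ⟨p⟩ := hconn v0 y
      obtain ⟨a, b, hadj, ha, hb⟩ := boundary (c t0) p ⟨i0, hi0, hv0⟩ hy
      have hs0 : c (t0 + 1) a = σ 0 :=
        (hstep t0 a).1 ⟨a, mem_cn_self G a, ha⟩ ⟨b, mem_cn_adj hadj, hb⟩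
      obtain ⟨t, g1, g2, g3⟩ := from_sigma0 hconn hdiam hinj hstep hD (t0 + 1) a hs0
      exact ⟨t, by omega, by omega, fun v => ⟨g3 v, (hstep t v).2.2 (fun w _ => g3 w)⟩⟩
end

section
/- In module Restart, if node v is in state σ(0) at time t, then for every 0 ≤ d ≤ D, every node u with dist_G(u, v) ≤ d is in some state σ(j) with 0 ≤ j ≤ d at time t + d. -/
set_option autoImplicit false

/-
The states `σ 0` spread as a wave: a node one step closer to `v` than `u` is, by induction, in
some `σ j` with `j ≤ d < 2D`. Then `u` either senses a non-σ-state and resets to `σ 0`, or senses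
only σ-states, not all `σ (2D)`, and moves to `σ (i_min + 1)` with `i_min ≤ j`.
-/

theorem SimpleGraph.exists_mem_closedNbhd_dist_le {V : Type} {G : SimpleGraph V} {u v : V}
    {d : ℕ} (hd : G.dist u v ≤ d + 1) : ∃ w ∈ closedNbhd G u, G.dist w v ≤ d := by
  by_cases hud : G.dist u v ≤ d
  · exact ⟨u, Or.inl rfl, hud⟩
  obtain ⟨p, hp⟩ := G.exists_walk_of_dist_ne_zero (u := u) (v := v) (by omega)
  cases p with
  | nil => simp at hud
  | @cons _ w _ hadj q =>
    refine ⟨w, Or.inr hadj.symm, ?_⟩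
    have := G.dist_le q
    simp only [SimpleGraph.Walk.length_cons] at hp
    omega

theorem RestartStep.exists_le_succ_of_mem_closedNbhd {V Q : Type} {D : ℕ} {σ : ℕ → Q} {q0 : Q}
    {G : SimpleGraph V} {c c' : V → Q} (hstep : RestartStep D σ q0 G c c')
    (hinj : ∀ i j, i ≤ 2 * D → j ≤ 2 * D → σ i = σ j → i = j)
    {u w : V} (hw : w ∈ closedNbhd G u) {j : ℕ} (hj : j < 2 * D) (hcw : c w = σ j) :
    ∃ i ≤ j + 1, c' u = σ i := by
  obtain ⟨hreset, hadvance, -⟩ := hstep u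
  by_cases hall : ∀ x ∈ closedNbhd G u, ∃ i ≤ 2 * D, c x = σ i
  · have hw_ne : c w ≠ σ (2 * D) := fun h =>
      absurd (hinj j (2 * D) hj.le le_rfl (hcw ▸ h)) hj.ne
    obtain ⟨i, -, hmin, hcu⟩ := hadvance hall ⟨w, hw, hw_ne⟩
    have hij : i ≤ j := not_lt.mp fun hji => hmin j hji w hw hcw
    exact ⟨i + 1, by omega, hcu⟩
  · push Not at hall
    exact ⟨0, Nat.zero_le _, hreset ⟨w, hw, j, hj.le, hcw⟩ hall⟩

theorem RestartStep.exists_le_of_dist_le {V Q : Type} {G : SimpleGraph V} (hconn : G.Connected)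
    {D : ℕ} {σ : ℕ → Q} {q0 : Q}
    (hinj : ∀ i j, i ≤ 2 * D → j ≤ 2 * D → σ i = σ j → i = j)
    {c : ℕ → V → Q} (hstep : ∀ t, RestartStep D σ q0 G (c t) (c (t + 1)))
    {t : ℕ} {v : V} (hv : c t v = σ 0) :
    ∀ d ≤ 2 * D, ∀ u : V, G.dist u v ≤ d → ∃ j ≤ d, c (t + d) u = σ j := by
  intro d
  induction d with
  | zero =>
    intro _ u hu
    obtain rfl : u = v := (hconn.dist_eq_zero_iff).mp (Nat.le_zero.mp hu)
    exact ⟨0, le_rfl, hv⟩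
  | succ d ih =>
    intro hd u hu
    obtain ⟨w, hw, hwv⟩ := SimpleGraph.exists_mem_closedNbhd_dist_le hu
    obtain ⟨j, hjd, hcw⟩ := ih (by omega) w hwv
    obtain ⟨i, hij, hcu⟩ :=
      (hstep (t + d)).exists_le_succ_of_mem_closedNbhd hinj hw (by omega) hcw
    exact ⟨i, by omega, hcu⟩

theorem stmt_13_general {V Q : Type} (G : SimpleGraph V) (hconn : G.Connected)
    (D : ℕ)
    (σ : ℕ → Q) (q0 : Q)
    (hinj : ∀ i j, i ≤ 2 * D → j ≤ 2 * D → σ i = σ j → i = j)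
    (c : ℕ → V → Q)
    (hstep : ∀ t, RestartStep D σ q0 G (c t) (c (t + 1)))
    (t : ℕ) (v : V) (hv : c t v = σ 0) :
    ∀ d ≤ D, ∀ u : V, G.dist u v ≤ d → ∃ j ≤ d, c (t + d) u = σ j :=
  fun d hd => RestartStep.exists_le_of_dist_le hconn hinj hstep hv d (by omega)

/-- in module Restart, if node `v` is in state `σ 0` at time `t`, then
for every `0 ≤ d ≤ D`, every node `u` at distance at most `d` from `v` is in some
state `σ j` with `j ≤ d` at time `t + d`. -/
theorem stmt_13 {V Q : Type} [Fintype V] (G : SimpleGraph V) (hconn : G.Connected)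
    (D : ℕ) (hdiam : ∀ u v : V, G.dist u v ≤ D)
    (σ : ℕ → Q) (q0 : Q)
    (hinj : ∀ i j, i ≤ 2 * D → j ≤ 2 * D → σ i = σ j → i = j)
    (hq0 : ∀ i ≤ 2 * D, q0 ≠ σ i)
    (c : ℕ → V → Q)
    (hstep : ∀ t, RestartStep D σ q0 G (c t) (c (t + 1)))
    (t : ℕ) (v : V) (hv : c t v = σ 0) :
    ∀ d ≤ D, ∀ u : V, G.dist u v ≤ d → ∃ j ≤ d, c (t + d) u = σ j :=
  stmt_13_general G hconn D σ q0 hinj c hstep t v hv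
end

section
/- In module Restart, if at time t all node states lie in {σ(j) : 0 ≤ j ≤ D}, and j_min = min{j : σ(j) ∈ Q^t}, then for every 0 ≤ h ≤ D, all node states at time t + h lie in {σ(i) : j_min + h ≤ i ≤ D + h}. -/
set_option autoImplicit false

/-- in module Restart, if at time `t` all node states lie in
`{σ j : 0 ≤ j ≤ D}` and `j_min` is the least index present, then for every
`0 ≤ h ≤ D`, all node states at time `t + h` lie in `{σ i : j_min + h ≤ i ≤ D + h}`. -/
theorem stmt_14 {V Q : Type} [Fintype V] (G : SimpleGraph V) (hconn : G.Connected)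
    (D : ℕ) (hdiam : ∀ u v : V, G.dist u v ≤ D)
    (σ : ℕ → Q) (q0 : Q)
    (hinj : ∀ i j, i ≤ 2 * D → j ≤ 2 * D → σ i = σ j → i = j)
    (hq0 : ∀ i ≤ 2 * D, q0 ≠ σ i)
    (c : ℕ → V → Q)
    (hstep : ∀ t, RestartStep D σ q0 G (c t) (c (t + 1)))
    (t : ℕ) (hall : ∀ v : V, ∃ j ≤ D, c t v = σ j)
    (jmin : ℕ) (hjmin1 : ∃ v : V, c t v = σ jmin)
    (hjmin2 : ∀ j < jmin, ∀ v : V, c t v ≠ σ j) :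
    ∀ h ≤ D, ∀ v : V, ∃ i, jmin + h ≤ i ∧ i ≤ D + h ∧ c (t + h) v = σ i := by
  intro h
  induction h with
  | zero =>
    intro _ v
    obtain ⟨j, hj, hcj⟩ := hall v
    refine ⟨j, ?_, by omega, by simpa using hcj⟩
    by_contra hlt
    exact hjmin2 j (by omega) v hcj
  | succ h ih =>
    intro hh v
    have inv := ih (by omega)
    have hstep' := (hstep (t + h) v).2.1
    have hσ : ∀ u ∈ closedNbhd G v, ∃ i ≤ 2 * D, c (t + h) u = σ i := by
      intro u hu
      obtain ⟨i, h1, h2, h3⟩ := inv u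
      exact ⟨i, by omega, h3⟩
    have hne : ∃ u ∈ closedNbhd G v, c (t + h) u ≠ σ (2 * D) := by
      refine ⟨v, Or.inl rfl, ?_⟩
      obtain ⟨i, h1, h2, h3⟩ := inv v
      rw [h3]
      intro heq
      have := hinj i (2 * D) (by omega) le_rfl heq
      omega
    obtain ⟨i, ⟨u, hu, hcu⟩, hmin, hc'⟩ := hstep' hσ hne
    obtain ⟨i', h1, h2, h3⟩ := inv u
    have hle : i ≤ i' := by
      by_contra hlt
      exact hmin i' (by omega) u hu h3
    have hii : i = i' := hinj i i' (by omega) (by omega) (hcu.symm.trans h3)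
    refine ⟨i + 1, by omega, by omega, ?_⟩
    have ht : t + (h + 1) = t + h + 1 := by omega
    rw [ht]
    exact hc'
end

section
/- In module Restart, if at time t all node states lie in {σ(j) : 0 ≤ j ≤ D}, with j_min = min{j : σ(j) ∈ Q^t} realized at a node v_min, then for every 0 ≤ d ≤ D, every node v with dist_G(v_min, v) ≤ d is in state exactly σ(j_min + d) at time t + d. Consequently, at time t + D all nodes share the same state σ(j_min + D). -/
set_option autoImplicit false

/-- in module Restart, if at time `t` all node states lie in
`{σ j : 0 ≤ j ≤ D}`, with least present index `j_min` realized at node `v_min`, then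
for every `0 ≤ d ≤ D`, every node at distance at most `d` from `v_min` is in state
exactly `σ (j_min + d)` at time `t + d`; consequently at time `t + D` all nodes share
the state `σ (j_min + D)`. -/
theorem stmt_15 {V Q : Type} [Fintype V] (G : SimpleGraph V) (hconn : G.Connected)
    (D : ℕ) (hdiam : ∀ u v : V, G.dist u v ≤ D)
    (σ : ℕ → Q) (q0 : Q)
    (hinj : ∀ i j, i ≤ 2 * D → j ≤ 2 * D → σ i = σ j → i = j)
    (hq0 : ∀ i ≤ 2 * D, q0 ≠ σ i)
    (c : ℕ → V → Q)
    (hstep : ∀ t, RestartStep D σ q0 G (c t) (c (t + 1)))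
    (t : ℕ) (hall : ∀ v : V, ∃ j ≤ D, c t v = σ j)
    (jmin : ℕ) (vmin : V) (hvmin : c t vmin = σ jmin)
    (hjmin2 : ∀ j < jmin, ∀ v : V, c t v ≠ σ j) :
    (∀ d ≤ D, ∀ v : V, G.dist vmin v ≤ d → c (t + d) v = σ (jmin + d)) ∧
    (∀ v : V, c (t + D) v = σ (jmin + D)) := by
  classical
  -- Invariant A: at time t+h all states have index in [jmin+h, D+h]
  have hA : ∀ h, h ≤ D → ∀ v : V, ∃ k, jmin + h ≤ k ∧ k ≤ D + h ∧ c (t + h) v = σ k := by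
    intro h
    induction h with
    | zero =>
      intro _ v
      obtain ⟨j, hj, hcv⟩ := hall v
      refine ⟨j, ?_, by omega, hcv⟩
      by_contra hlt
      push_neg at hlt
      exact hjmin2 j (by omega) v hcv
    | succ h ih =>
      intro hh v
      have ih' := ih (by omega)
      have hR := (hstep (t + h) v).2.1
      have h1 : ∀ u ∈ closedNbhd G v, ∃ i ≤ 2 * D, c (t + h) u = σ i := by
        intro u hu
        obtain ⟨k, hk1, hk2, hk3⟩ := ih' u
        exact ⟨k, by omega, hk3⟩
      have h2 : ∃ u ∈ closedNbhd G v, c (t + h) u ≠ σ (2 * D) := by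
        obtain ⟨k, hk1, hk2, hk3⟩ := ih' v
        refine ⟨v, Or.inl rfl, ?_⟩
        rw [hk3]
        intro heq
        have := hinj k (2 * D) (by omega) le_rfl heq
        omega
      obtain ⟨i, ⟨u, hu, hcu⟩, hmin, hc'⟩ := hR h1 h2
      obtain ⟨kv, hkv1, hkv2, hkv3⟩ := ih' v
      obtain ⟨ku, hku1, hku2, hku3⟩ := ih' u
      have hile : i ≤ kv := by
        by_contra hlt
        push_neg at hlt
        exact hmin kv hlt v (Or.inl rfl) hkv3
      have hieq : i = ku := hinj i ku (by omega) (by omega) (hcu ▸ hku3 ▸ rfl)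
      refine ⟨i + 1, by omega, by omega, ?_⟩
      have : t + (h + 1) = t + h + 1 := by omega
      rw [this, hc']
  -- Main claim by induction on d
  have hB : ∀ d, d ≤ D → ∀ v : V, G.dist vmin v ≤ d → c (t + d) v = σ (jmin + d) := by
    intro d
    induction d with
    | zero =>
      intro _ v hd
      have : vmin = v := by
        have h0 : G.dist vmin v = 0 := by omega
        exact ((hconn vmin v).dist_eq_zero_iff).mp h0
      simpa [← this] using hvmin
    | succ h ih =>
      intro hh v hd
      -- find u in the closed neighborhood of v with dist vmin u ≤ h
      have hnb : ∃ u ∈ closedNbhd G v, G.dist vmin u ≤ h := by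
        by_cases hle : G.dist vmin v ≤ h
        · exact ⟨v, Or.inl rfl, hle⟩
        · push_neg at hle
          obtain ⟨p, hp⟩ := (hconn vmin v).exists_walk_length_eq_dist
          have hlen : p.length = h + 1 := by omega
          cases hq : p.reverse with
          | nil =>
            exfalso
            have := congrArg SimpleGraph.Walk.length hq
            simp [hlen] at this
          | cons hadj q =>
            rename_i u
            refine ⟨u, Or.inr hadj.symm, ?_⟩
            have hql : q.length = h := by
              have := congrArg SimpleGraph.Walk.length hq
              simp [hlen] at this
              omega
            calc G.dist vmin u = G.dist u vmin := SimpleGraph.dist_comm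
              _ ≤ q.length := SimpleGraph.dist_le q
              _ = h := hql
      obtain ⟨u, hu, hdu⟩ := hnb
      have hcu : c (t + h) u = σ (jmin + h) := ih (by omega) u hdu
      have ih' := hA h (by omega)
      have hR := (hstep (t + h) v).2.1
      have h1 : ∀ w ∈ closedNbhd G v, ∃ i ≤ 2 * D, c (t + h) w = σ i := by
        intro w hw
        obtain ⟨k, hk1, hk2, hk3⟩ := ih' w
        exact ⟨k, by omega, hk3⟩
      have h2 : ∃ w ∈ closedNbhd G v, c (t + h) w ≠ σ (2 * D) := by
        obtain ⟨k, hk1, hk2, hk3⟩ := ih' v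
        refine ⟨v, Or.inl rfl, ?_⟩
        rw [hk3]
        intro heq
        have := hinj k (2 * D) (by omega) le_rfl heq
        omega
      obtain ⟨i, ⟨w, hw, hcw⟩, hmin, hc'⟩ := hR h1 h2
      have hile : i ≤ jmin + h := by
        by_contra hlt
        push_neg at hlt
        exact hmin (jmin + h) hlt u hu hcu
      obtain ⟨kw, hkw1, hkw2, hkw3⟩ := ih' w
      have hieq : i = kw := hinj i kw (by omega) (by omega) (hcw ▸ hkw3 ▸ rfl)
      have hival : i = jmin + h := by omega
      have : t + (h + 1) = t + h + 1 := by omega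
      rw [this, hc', hival]
      congr 1
  refine ⟨hB, fun v => hB D le_rfl v (hdiam vmin v)⟩
end

section
/- In module RandPhase, suppose that in round t node v_max (the last node to reset its flag) sets flag := 0, with all flags 0 thereafter. Then for every 0 ≤ d ≤ D: (1) all edges are valid at time t + d; (2) v.step^{t+d} ≥ d for every node v; and (3) v.step^{t+d} ≤ max{d, dist_G(v_max, v)} for every node v. Consequently, all nodes set step = D + 1 concurrently in round t + D. -/
set_option autoImplicit false

/-!
Write `N[v]` for the closed neighbourhood of `v`. Once all flags are reset, one round maps `f` to
`g v = min_{u ∈ N[v]} f u + 1`. If every edge is valid for `f`, i.e. `f` is 1-Lipschitz along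
edges, then so is `g`; moreover `f ≥ d` gives `g ≥ d + 1`, and `f v ≤ max d (dist w v)` gives
`g v ≤ max (d + 1) (dist w v)` by looking at a neighbour of `v` one step closer to `w`. At time
`t` both bounds hold with `d = 0`, since `step vmax = 0` and validity bounds `step v` by
`dist vmax v`. The upper bound keeps every value `≤ D`, so the update really fires in each of the
rounds `t, …, t + D`, and after them both bounds equal `D + 1` since every distance is `≤ D`.
-/

namespace SimpleGraph

variable {V : Type*} (G : SimpleGraph V)

def EdgesValid (f : V → ℕ) : Prop :=
  ∀ u v, G.Adj u v → f u ≤ f v + 1 ∧ f v ≤ f u + 1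

def IsNbhdMinSucc (f g : V → ℕ) : Prop :=
  ∀ v, (∀ u, (u = v ∨ G.Adj u v) → g v ≤ f u + 1) ∧ ∃ u, (u = v ∨ G.Adj u v) ∧ g v = f u + 1

def PhaseInvariant (w : V) (d : ℕ) (f : V → ℕ) : Prop :=
  G.EdgesValid f ∧ (∀ v, d ≤ f v) ∧ ∀ v, f v ≤ max d (G.dist w v)

variable {G}

theorem EdgesValid.le_add_length {f : V → ℕ} (hf : G.EdgesValid f) :
    ∀ {a b : V} (p : G.Walk a b), f b ≤ f a + p.length
  | _, _, .nil => by simp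
  | _, _, .cons h p => by
    have := hf.le_add_length p
    have := (hf _ _ h).2
    rw [Walk.length_cons]
    omega

theorem EdgesValid.le_add_dist {f : V → ℕ} (hf : G.EdgesValid f) {a b : V}
    (hab : G.Reachable a b) : f b ≤ f a + G.dist a b := by
  obtain ⟨p, hp⟩ := hab.exists_walk_length_eq_dist
  exact hp ▸ hf.le_add_length p

theorem exists_adj_dist_add_one_le {w v : V} (h : G.dist w v ≠ 0) :
    ∃ x, G.Adj x v ∧ G.dist w x + 1 ≤ G.dist w v := by
  rw [dist_comm] at h ⊢
  obtain ⟨p, hp⟩ := exists_walk_of_dist_ne_zero h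
  cases p with
  | nil => simp at h
  | cons hadj q =>
    refine ⟨_, hadj.symm, ?_⟩
    rw [dist_comm, ← hp, Walk.length_cons]
    exact Nat.add_le_add_right (dist_le q) 1

theorem isNbhdMinSucc_of_update {f g : V → ℕ} {N : ℕ} (hf : ∀ v, f v < N)
    (hupd : ∀ v m, ((∀ u, (u = v ∨ G.Adj u v) → m ≤ f u) ∧
      ∃ u, (u = v ∨ G.Adj u v) ∧ f u = m) → m < N → g v = m + 1) :
    G.IsNbhdMinSucc f g := by
  classical
  intro v
  have hex : ∃ m, ∃ u, (u = v ∨ G.Adj u v) ∧ f u = m := ⟨f v, v, .inl rfl, rfl⟩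
  have hmin : ∀ u, (u = v ∨ G.Adj u v) → Nat.find hex ≤ f u :=
    fun u hu => Nat.find_min' hex ⟨u, hu, rfl⟩
  have hg : g v = Nat.find hex + 1 :=
    hupd v _ ⟨hmin, Nat.find_spec hex⟩ ((hmin v (.inl rfl)).trans_lt (hf v))
  obtain ⟨u₀, hu₀, hfu₀⟩ := Nat.find_spec hex
  exact ⟨fun u hu => hg ▸ Nat.add_le_add_right (hmin u hu) 1, u₀, hu₀, hfu₀ ▸ hg⟩

section Round

variable {f g : V → ℕ}

theorem IsNbhdMinSucc.edgesValid (hfg : G.IsNbhdMinSucc f g) (hf : G.EdgesValid f) :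
    G.EdgesValid g := by
  have key : ∀ u v, G.Adj u v → g u ≤ g v + 1 := by
    intro u v huv
    obtain ⟨v₀, hv₀, hgv⟩ := (hfg v).2
    have hfv : f v ≤ f v₀ + 1 := by
      rcases hv₀ with rfl | hadj
      · omega
      · exact (hf v₀ v hadj).2
    have := (hfg u).1 v (.inr huv.symm)
    omega
  exact fun u v huv => ⟨key u v huv, key v u huv.symm⟩

theorem IsNbhdMinSucc.succ_le (hfg : G.IsNbhdMinSucc f g) {d : ℕ}
    (hf : ∀ v, d ≤ f v) (v : V) : d + 1 ≤ g v := by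
  obtain ⟨u, -, hgv⟩ := (hfg v).2
  have := hf u
  omega

theorem IsNbhdMinSucc.le_max_succ_dist (hfg : G.IsNbhdMinSucc f g) {w : V} {d : ℕ}
    (hf : ∀ v, f v ≤ max d (G.dist w v)) (v : V) : g v ≤ max (d + 1) (G.dist w v) := by
  have hgv := (hfg v).1
  by_cases hle : G.dist w v ≤ d
  · have := hgv v (.inl rfl)
    have := hf v
    omega
  · obtain ⟨x, hxv, hx⟩ := exists_adj_dist_add_one_le (G := G) (w := w) (v := v) (by omega)
    have := hgv x (.inr hxv)
    have := hf x
    omega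

theorem PhaseInvariant.succ {w : V} {d : ℕ} (hf : G.PhaseInvariant w d f)
    (hfg : G.IsNbhdMinSucc f g) :
    G.PhaseInvariant w (d + 1) g :=
  ⟨hfg.edgesValid hf.1, hfg.succ_le hf.2.1, hfg.le_max_succ_dist hf.2.2⟩

end Round

theorem phaseInvariant_zero (hconn : G.Connected) {f : V → ℕ} (hf : G.EdgesValid f) {w : V}
    (hw : f w = 0) : G.PhaseInvariant w 0 f := by
  refine ⟨hf, fun v => Nat.zero_le _, fun v => ?_⟩
  have := hf.le_add_dist (hconn w v)
  omega

end SimpleGraph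

open SimpleGraph in
theorem stmt_16_general {V : Type} (G : SimpleGraph V) (hconn : G.Connected)
    (D : ℕ) (hdiam : ∀ u v : V, G.dist u v ≤ D)
    (step : ℕ → V → ℕ)
    (vmax : V) (t : ℕ)
    (hupd : ∀ s, t ≤ s → ∀ v : V, ∀ m : ℕ,
      ((∀ u : V, (u = v ∨ G.Adj u v) → m ≤ step s u) ∧
        (∃ u : V, (u = v ∨ G.Adj u v) ∧ step s u = m)) →
      m < D + 2 → step (s + 1) v = m + 1)
    (hvalid : ∀ u v : V, G.Adj u v → step t u ≤ step t v + 1 ∧ step t v ≤ step t u + 1)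
    (h0 : step t vmax = 0) :
    (∀ d ≤ D,
      (∀ u v : V, G.Adj u v →
        step (t + d) u ≤ step (t + d) v + 1 ∧ step (t + d) v ≤ step (t + d) u + 1) ∧
      (∀ v : V, d ≤ step (t + d) v) ∧
      (∀ v : V, step (t + d) v ≤ max d (G.dist vmax v))) ∧
    (∀ v : V, step (t + D + 1) v = D + 1) := by
  have hinv : ∀ d ≤ D + 1, G.PhaseInvariant vmax d (step (t + d)) := by
    intro d
    induction d with
    | zero => exact fun _ => phaseInvariant_zero hconn hvalid h0
    | succ d ih =>
      intro hd
      have hf := ih (by omega)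
      have hbound : ∀ v, step (t + d) v < D + 2 := fun v => by
        have := hf.2.2 v
        have := hdiam vmax v
        omega
      exact hf.succ (isNbhdMinSucc_of_update hbound (hupd (t + d) (by omega)))
  refine ⟨fun d hd => hinv d (by omega), fun v => ?_⟩
  show step (t + (D + 1)) v = D + 1
  obtain ⟨-, hlow, hup⟩ := hinv (D + 1) le_rfl
  have := hlow v
  have := hup v
  have := hdiam vmax v
  omega

/-- in module RandPhase, suppose that in round `t` node `v_max` (the last
node to reset its flag) sets `flag := 0`, so that from round `t` on every node `v`
updates `step` by `step := min {step u : u ∈ N⁺(v)} + 1` whenever this minimum is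
`< D + 2`. Assume all edges are valid at time `t` and `step t v_max = 0`. Then for
every `0 ≤ d ≤ D`: (1) all edges are valid at time `t + d`; (2) `d ≤ step (t+d) v` for
every node `v`; (3) `step (t+d) v ≤ max d (dist v_max v)` for every node `v`; and
consequently all nodes set `step = D + 1` concurrently in round `t + D`. -/
theorem stmt_16 {V : Type} [Fintype V] (G : SimpleGraph V) (hconn : G.Connected)
    (D : ℕ) (hdiam : ∀ u v : V, G.dist u v ≤ D)
    (step : ℕ → V → ℕ)
    (vmax : V) (t : ℕ)
    (hupd : ∀ s, t ≤ s → ∀ v : V, ∀ m : ℕ,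
      ((∀ u : V, (u = v ∨ G.Adj u v) → m ≤ step s u) ∧
        (∃ u : V, (u = v ∨ G.Adj u v) ∧ step s u = m)) →
      m < D + 2 → step (s + 1) v = m + 1)
    (hvalid : ∀ u v : V, G.Adj u v → step t u ≤ step t v + 1 ∧ step t v ≤ step t u + 1)
    (h0 : step t vmax = 0) :
    (∀ d ≤ D,
      (∀ u v : V, G.Adj u v →
        step (t + d) u ≤ step (t + d) v + 1 ∧ step (t + d) v ≤ step (t + d) u + 1) ∧
      (∀ v : V, d ≤ step (t + d) v) ∧
      (∀ v : V, step (t + d) v ≤ max d (G.dist vmax v))) ∧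
    (∀ v : V, step (t + D + 1) v = D + 1) :=
  stmt_16_general G hconn D hdiam step vmax t hupd hvalid h0
end

section
/- In module Elect, if the module runs for at least c_0 log_2 n epochs, then with probability at least 1 − n^{2 − c_0} at most one node remains a candidate at the end: for any two distinct nodes u, v, the probability that both still have candidate = 1 after c_0 log_2 n epochs is at most n^{−c_0}. -/
/-! If two candidates toss different coins in some epoch, the one that tossed 0 drops out, so two
nodes that are both candidates after `τ` epochs tossed equal coins in every epoch. By independence
this has probability `2^{-τ} ≤ n^{-c₀}`, and a union bound over the at most `n²` ordered pairs
gives the second claim. -/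

open MeasureTheory ProbabilityTheory
open scoped ENNReal

section Coins

variable {Ω : Type*} [MeasurableSpace Ω] {μ : Measure Ω}

lemma measure_eq_false_of_fair [IsProbabilityMeasure μ] {X : Ω → Bool} (hX : Measurable X)
    (hfair : μ {ω | X ω = true} = 1 / 2) : μ {ω | X ω = false} = 1 / 2 := by
  have hcompl : {ω | X ω = false} = {ω | X ω = true}ᶜ := by ext ω; simp
  rw [hcompl, prob_compl_eq_one_sub (measurableSet_eq_fun hX measurable_const), hfair,
    one_div, ENNReal.one_sub_inv_two]

lemma measure_eq_of_indepFun_of_fair [IsProbabilityMeasure μ] {X Y : Ω → Bool}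
    (hX : Measurable X) (hY : Measurable Y) (hXY : IndepFun X Y μ)
    (hfair : μ {ω | X ω = true} = 1 / 2) : μ {ω | X ω = Y ω} = 1 / 2 := by
  have hsplit : {ω | X ω = Y ω} =
      (X ⁻¹' {true} ∩ Y ⁻¹' {true}) ∪ (X ⁻¹' {false} ∩ Y ⁻¹' {false}) := by
    ext ω; cases hx : X ω <;> cases hy : Y ω <;> simp [hx, hy]
  have hdisj : Disjoint (X ⁻¹' {true} ∩ Y ⁻¹' {true}) (X ⁻¹' {false} ∩ Y ⁻¹' {false}) :=
    ((Disjoint.preimage X (by simp)).mono Set.inter_subset_left Set.inter_subset_left)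
  have hY_total : μ (Y ⁻¹' {true}) + μ (Y ⁻¹' {false}) = 1 := by
    rw [← Fintype.sum_bool fun b => μ (Y ⁻¹' {b}),
      sum_measure_preimage_singleton _ fun b _ => hY (measurableSet_singleton b),
      Finset.coe_univ, Set.preimage_univ, measure_univ]
  rw [hsplit, measure_union hdisj ((hX (measurableSet_singleton _)).inter
      (hY (measurableSet_singleton _))),
    hXY.measure_inter_preimage_eq_mul _ _ (measurableSet_singleton _) (measurableSet_singleton _),
    hXY.measure_inter_preimage_eq_mul _ _ (measurableSet_singleton _) (measurableSet_singleton _)]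
  change μ {ω | X ω = true} * _ + μ {ω | X ω = false} * _ = _
  rw [measure_eq_false_of_fair hX hfair, hfair, ← mul_add, hY_total, mul_one]

lemma measure_biInter_range_coins_eq [IsProbabilityMeasure μ] {ι : Type*} {C : ι → ℕ → Ω → Bool}
    (hmeas : ∀ v i, Measurable (C v i))
    (hindep : iIndepFun (fun p : ι × ℕ => fun ω => C p.1 p.2 ω) μ)
    {u v : ι} (huv : u ≠ v) (hfair : ∀ i, μ {ω | C u i ω = true} = 1 / 2) (τ : ℕ) :
    μ (⋂ i ∈ Finset.range τ, {ω | C u i ω = C v i ω}) = (1 / 2) ^ τ := by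
  set m : ι × ℕ → MeasurableSpace Ω := fun p => MeasurableSpace.comap (C p.1 p.2) inferInstance
  have hmeas_of_mem {S : Set (ι × ℕ)} {w : ι} {i : ℕ} (h : (w, i) ∈ S) :
      Measurable[⨆ p ∈ S, m p] (C w i) :=
    Measurable.of_comap_le (le_iSup₂ (f := fun p _ => m p) (w, i) h)
  induction τ with
  | zero => simp
  | succ k ih =>
    -- The agreement events before epoch `k` and at epoch `k` are determined by the coins on the
    -- disjoint blocks `{u, v} × [0, k)` and `{u, v} × {k}`.
    have hST : Disjoint (({u, v} : Set ι) ×ˢ Set.Iio k) (({u, v} : Set ι) ×ˢ {k}) :=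
      Set.disjoint_prod.2 (Or.inr (by simp))
    have hindep_ST := indep_iSup_of_disjoint (fun p => (hmeas p.1 p.2).comap_le) hindep.iIndep hST
    have hpast : MeasurableSet[⨆ p ∈ ({u, v} : Set ι) ×ˢ Set.Iio k, m p]
        (⋂ i ∈ Finset.range k, {ω | C u i ω = C v i ω}) :=
      Finset.measurableSet_biInter _ fun i hi => measurableSet_eq_fun
        (hmeas_of_mem (by simpa using hi)) (hmeas_of_mem (by simpa using hi))
    have hnow : MeasurableSet[⨆ p ∈ ({u, v} : Set ι) ×ˢ {k}, m p] {ω | C u k ω = C v k ω} :=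
      measurableSet_eq_fun (hmeas_of_mem (by simp)) (hmeas_of_mem (by simp))
    rw [Finset.range_add_one, Finset.set_biInter_insert, Set.inter_comm,
      (Indep_iff _ _ μ).1 hindep_ST _ _ hpast hnow, ih,
      measure_eq_of_indepFun_of_fair (hmeas u k) (hmeas v k)
        (hindep.indepFun (i := (u, k)) (j := (v, k)) (by simp [huv])) (hfair k), pow_succ]

end Coins

section Elect

variable {ι Ω : Type*} {C : ι → ℕ → Ω → Bool} {cand : ℕ → ι → Ω → Prop}

def IsElectRun (C : ι → ℕ → Ω → Bool) (cand : ℕ → ι → Ω → Prop) : Prop :=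
  ∀ i v ω, cand (i + 1) v ω ↔
    cand i v ω ∧ ¬ (C v i ω = false ∧ ∃ u, cand i u ω ∧ C u i ω = true)

lemma cand_antitone (hrun : IsElectRun C cand) (v : ι) (ω : Ω) : Antitone fun i => cand i v ω :=
  antitone_nat_of_succ_le fun i h => ((hrun i v ω).1 h).1

lemma coin_eq_of_cand_succ (hrun : IsElectRun C cand)
    {u v : ι} {ω : Ω} {i : ℕ} (hu : cand (i + 1) u ω) (hv : cand (i + 1) v ω) :
    C u i ω = C v i ω := by
  obtain ⟨hu_prev, hu_stays⟩ := (hrun i u ω).1 hu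
  obtain ⟨hv_prev, hv_stays⟩ := (hrun i v ω).1 hv
  cases hcu : C u i ω <;> cases hcv : C v i ω
  · rfl
  · exact absurd ⟨hcu, v, hv_prev, hcv⟩ hu_stays
  · exact absurd ⟨hcv, u, hu_prev, hcu⟩ hv_stays
  · rfl

lemma cand_pair_subset_biInter_coins_eq (hrun : IsElectRun C cand) (u v : ι) (τ : ℕ) :
    {ω | cand τ u ω ∧ cand τ v ω} ⊆ ⋂ i ∈ Finset.range τ, {ω | C u i ω = C v i ω} := by
  rintro ω ⟨hu, hv⟩
  simp only [Set.mem_iInter, Finset.mem_range, Set.mem_ofPred_eq]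
  exact fun i hi => coin_eq_of_cand_succ hrun
    (cand_antitone hrun u ω hi hu) (cand_antitone hrun v ω hi hv)

end Elect

lemma half_pow_le_ofReal_rpow_neg {x c : ℝ} {τ : ℕ} (hx : 0 < x)
    (hτ : c * Real.logb 2 x ≤ τ) : (1 / 2 : ℝ≥0∞) ^ τ ≤ ENNReal.ofReal (x ^ (-c)) := by
  have hreal : (1 / 2 : ℝ) ^ τ ≤ x ^ (-c) := calc
    (1 / 2 : ℝ) ^ τ = 2 ^ (-(τ : ℝ)) := by
      rw [Real.rpow_neg zero_le_two, Real.rpow_natCast, one_div, inv_pow]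
    _ ≤ 2 ^ (Real.logb 2 x * -c) :=
      Real.rpow_le_rpow_of_exponent_le one_le_two (by linarith)
    _ = x ^ (-c) := by rw [Real.rpow_mul zero_le_two, Real.rpow_logb two_pos (by norm_num) hx]
  calc (1 / 2 : ℝ≥0∞) ^ τ = ENNReal.ofReal ((1 / 2 : ℝ) ^ τ) := by
        rw [ENNReal.ofReal_pow (by norm_num), ENNReal.ofReal_div_of_pos two_pos]
        simp
    _ ≤ ENNReal.ofReal (x ^ (-c)) := ENNReal.ofReal_le_ofReal hreal

lemma measure_exists_ne_le_card_sq_mul {Ω ι : Type*} [MeasurableSpace Ω] [Fintype ι]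
    {μ : Measure Ω} {E : ι → ι → Set Ω} {ε : ℝ≥0∞} (h : ∀ u v, u ≠ v → μ (E u v) ≤ ε) :
    μ {ω | ∃ u v, u ≠ v ∧ ω ∈ E u v} ≤ Fintype.card ι ^ 2 * ε := calc
  μ {ω | ∃ u v, u ≠ v ∧ ω ∈ E u v} = μ (⋃ u, ⋃ v, {ω | u ≠ v ∧ ω ∈ E u v}) := by
    congr 1; ext ω; simp
  _ ≤ ∑ u, ∑ v, μ {ω | u ≠ v ∧ ω ∈ E u v} :=
    (measure_iUnion_fintype_le _ _).trans
      (Finset.sum_le_sum fun u _ => measure_iUnion_fintype_le _ _)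
  _ ≤ ∑ _u : ι, ∑ _v : ι, ε := by
    gcongr with u _ v _
    by_cases huv : u = v
    · simp [huv]
    · exact (measure_mono fun ω hω => hω.2).trans (h u v huv)
  _ = Fintype.card ι ^ 2 * ε := by simp [sq, mul_assoc]

theorem stmt_18_general {Ω : Type} [MeasurableSpace Ω] (μ : Measure Ω) [IsProbabilityMeasure μ]
    (n : ℕ) (hn : 2 ≤ n)
    (C : Fin n → ℕ → Ω → Bool)
    (hmeas : ∀ v i, Measurable (C v i))
    (hindep : iIndepFun
      (fun p : Fin n × ℕ => fun ω => C p.1 p.2 ω) μ)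
    (hfair : ∀ v i, μ {ω | C v i ω = true} = 1 / 2)
    (cand : ℕ → Fin n → Ω → Prop)
    (hcandS : ∀ i v ω, cand (i + 1) v ω ↔
      cand i v ω ∧ ¬ (C v i ω = false ∧ ∃ u, cand i u ω ∧ C u i ω = true))
    (c0 : ℝ) (τ : ℕ) (hτ : c0 * Real.logb 2 n ≤ τ) :
    (∀ u v : Fin n, u ≠ v →
      μ {ω | cand τ u ω ∧ cand τ v ω} ≤ ENNReal.ofReal ((n : ℝ) ^ (-c0))) ∧
    μ {ω | ∃ u v : Fin n, u ≠ v ∧ cand τ u ω ∧ cand τ v ω} ≤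
      ENNReal.ofReal ((n : ℝ) ^ (2 - c0)) := by
  have hn_pos : (0 : ℝ) < n := Nat.cast_pos.2 (by omega)
  have hpair (u v : Fin n) (huv : u ≠ v) :
      μ {ω | cand τ u ω ∧ cand τ v ω} ≤ ENNReal.ofReal ((n : ℝ) ^ (-c0)) := calc
    _ ≤ μ (⋂ i ∈ Finset.range τ, {ω | C u i ω = C v i ω}) :=
      measure_mono (cand_pair_subset_biInter_coins_eq hcandS u v τ)
    _ = (1 / 2) ^ τ := measure_biInter_range_coins_eq hmeas hindep huv (hfair u) τ
    _ ≤ _ := half_pow_le_ofReal_rpow_neg hn_pos hτ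
  refine ⟨hpair, ?_⟩
  calc _ ≤ (Fintype.card (Fin n) : ℝ≥0∞) ^ 2 * ENNReal.ofReal ((n : ℝ) ^ (-c0)) :=
        measure_exists_ne_le_card_sq_mul hpair
    _ = ENNReal.ofReal ((n : ℝ) ^ (2 - c0)) := by
        rw [sub_eq_add_neg, Real.rpow_add hn_pos, ENNReal.ofReal_mul (by positivity),
          Real.rpow_two, ENNReal.ofReal_pow hn_pos.le, ENNReal.ofReal_natCast, Fintype.card_fin]

/-- in module Elect with `n` nodes and independent fair coins
`C v i` (the coin of node `v` in epoch `i`), where all nodes start as candidates and a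
candidate `v` resets its candidate bit in epoch `i` iff `C v i = false` while some
candidate `u` has `C u i = true`: for any two distinct nodes `u, v`, the probability
that both are still candidates after `τ ≥ c₀ log₂ n` epochs is at most `n^{-c₀}`,
and with probability at least `1 - n^{2 - c₀}` at most one candidate remains. -/
theorem stmt_18 {Ω : Type} [MeasurableSpace Ω] (μ : Measure Ω) [IsProbabilityMeasure μ]
    (n : ℕ) (hn : 2 ≤ n)
    (C : Fin n → ℕ → Ω → Bool)
    (hmeas : ∀ v i, Measurable (C v i))
    (hindep : iIndepFun
      (fun p : Fin n × ℕ => fun ω => C p.1 p.2 ω) μ)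
    (hfair : ∀ v i, μ {ω | C v i ω = true} = 1 / 2)
    (cand : ℕ → Fin n → Ω → Prop)
    (hcand0 : ∀ v ω, cand 0 v ω)
    (hcandS : ∀ i v ω, cand (i + 1) v ω ↔
      cand i v ω ∧ ¬ (C v i ω = false ∧ ∃ u, cand i u ω ∧ C u i ω = true))
    (c0 : ℝ) (τ : ℕ) (hτ : c0 * Real.logb 2 n ≤ τ) :
    (∀ u v : Fin n, u ≠ v →
      μ {ω | cand τ u ω ∧ cand τ v ω} ≤ ENNReal.ofReal ((n : ℝ) ^ (-c0))) ∧
    μ {ω | ∃ u v : Fin n, u ≠ v ∧ cand τ u ω ∧ cand τ v ω} ≤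
      ENNReal.ofReal ((n : ℝ) ^ (2 - c0)) :=
  stmt_18_general μ n hn C hmeas hindep hfair cand hcandS c0 τ hτ
end
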